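/- Let a > 0. For every real x ≠ 0, 1/( x · sinh(πx/a) ) = (a/(2π)) ∫_0^∞ u^{−2} e^{−x²/(2u)} ( Σ_{n∈ℤ} (−1)^n e^{−n²a²/(2u)} ) du. (The symmetric part of the Meixner Lévy density is the Gaussian mixture of the explicit time-change Lévy density (a/√(2πu³)) Σ_{n∈ℤ}(−1)^n e^{−n²a²/(2u)} · (2πu)^{−1/2}; the series Σ_{n∈ℤ}(−1)^n e^{−n²a²/(2u)} equals P(M₁^{(3)} ≥ (π/a)√u), the tail of the maximum of a standard Bessel(3) bridge-type hitting time.) -/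

import Mathlib

/-!
Expanding the theta series, the integrand becomes `∑ₙ (-1)ⁿ u⁻² exp (-(x² + n²a²)/(2u))`.
The substitution `t = 1/u` gives `∫₀^∞ u⁻² e^{-c/(2u)} du = 2/c`, and since `∑ₙ 1/(x² + n²a²)`
converges, the sum and the integral may be interchanged. What remains is the partial fraction
expansion `∑ₙ (-1)ⁿ/(n² + y²) = π/(y sinh (πy))`, which is the Fourier series of `cosh (y t)` on
`[-π, π]` evaluated at `t = 0`.
-/

open MeasureTheory Real Set

/- The shape of `integral_comp_rpow_Ioi` for the substitution `u ↦ u ^ (-1)`. -/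
private theorem rpow_neg_two_mul_exp_neg_div_eq (c u : ℝ) :
    u ^ (-2 : ℝ) * exp (-c / (2 * u)) =
      (|(-1 : ℝ)| * u ^ ((-1 : ℝ) - 1)) • exp (-(c / 2) * u ^ (-1 : ℝ)) := by
  rw [rpow_neg_one, abs_neg, abs_one, one_mul, smul_eq_mul, show (-1 : ℝ) - 1 = -2 by norm_num]
  ring_nf

theorem integrableOn_rpow_neg_two_mul_exp_neg_div {c : ℝ} (hc : 0 < c) :
    IntegrableOn (fun u : ℝ => u ^ (-2 : ℝ) * exp (-c / (2 * u))) (Ioi 0) := by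
  simp_rw [rpow_neg_two_mul_exp_neg_div_eq c]
  exact (integrableOn_Ioi_comp_rpow_iff (fun t => exp (-(c / 2) * t)) (by norm_num)).mpr
    (by simpa using integrableOn_exp_mul_Ioi (neg_neg_of_pos (half_pos hc)) 0)

theorem integral_rpow_neg_two_mul_exp_neg_div {c : ℝ} (hc : 0 < c) :
    ∫ u in Ioi (0 : ℝ), u ^ (-2 : ℝ) * exp (-c / (2 * u)) = 2 / c := by
  simp_rw [rpow_neg_two_mul_exp_neg_div_eq c]
  rw [integral_comp_rpow_Ioi (fun t => exp (-(c / 2) * t)) (by norm_num),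
    integral_exp_mul_Ioi (neg_neg_of_pos (half_pos hc))]
  field_simp
  simp

theorem integral_tsum_mul_rpow_neg_two_mul_exp_neg_div {w c : ℤ → ℝ} (hc : ∀ n, 0 < c n)
    (hs : Summable fun n => |w n| / c n) :
    ∫ u in Ioi (0 : ℝ), ∑' n, w n * (u ^ (-2 : ℝ) * exp (-c n / (2 * u))) =
      ∑' n, w n * (2 / c n) := by
  have hnorm (n : ℤ) : ∫ u in Ioi (0 : ℝ), ‖w n * (u ^ (-2 : ℝ) * exp (-c n / (2 * u)))‖ =
      2 * (|w n| / c n) := by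
    rw [setIntegral_congr_fun measurableSet_Ioi fun u (hu : 0 < u) => by
        rw [norm_mul, Real.norm_eq_abs, Real.norm_of_nonneg (by positivity)],
      integral_const_mul, integral_rpow_neg_two_mul_exp_neg_div (hc n)]
    ring
  rw [← integral_tsum_of_summable_integral_norm
    (fun n => (integrableOn_rpow_neg_two_mul_exp_neg_div (hc n)).const_mul (w n))
    (by simpa only [hnorm] using hs.mul_left 2)]
  simp_rw [integral_const_mul, integral_rpow_neg_two_mul_exp_neg_div (hc _)]

open Complex in
theorem hasDerivAt_exp_mul_sinh_cosh_div (y n : ℂ) (h : y ^ 2 + n ^ 2 ≠ 0) (z : ℂ) :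
    HasDerivAt
      (fun z => exp (-(I * n * z)) * (y * sinh (y * z) + I * n * cosh (y * z)) / (y ^ 2 + n ^ 2))
      (exp (-(I * n * z)) * cosh (y * z)) z := by
  have hlin (c : ℂ) : HasDerivAt (fun z => c * z) c z := by
    simpa using (hasDerivAt_id z).const_mul c
  have := (((hlin (I * n)).neg.cexp).mul
    (((hlin y).csinh.const_mul y).add ((hlin y).ccosh.const_mul (I * n)))).div_const (y ^ 2 + n ^ 2)
  refine this.congr_deriv ?_
  simp only [Pi.neg_apply, Pi.add_apply]
  rw [div_eq_iff h]
  linear_combination (-exp (-(I * n * z)) * n ^ 2 * cosh (y * z)) * I_sq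

open Complex in
theorem integral_exp_mul_cosh_neg_pi_pi (y : ℂ) (n : ℤ) (h : y ^ 2 + n ^ 2 ≠ 0) :
    ∫ t in (-π)..π, exp (-(I * n * t)) * cosh (y * t) =
      2 * (-1) ^ n * y * sinh (π * y) / (y ^ 2 + n ^ 2) := by
  rw [intervalIntegral.integral_eq_sub_of_hasDerivAt
    (fun t _ => (hasDerivAt_exp_mul_sinh_cosh_div y n h t).comp_ofReal)
    (Continuous.intervalIntegrable (by fun_prop) _ _)]
  have hpos : exp (-(I * n * π)) = (-1) ^ n := by
    rw [show -(I * n * π) = n * (-(π * I)) by ring, exp_int_mul, exp_neg_pi_mul_I]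
  have hneg : exp (-(I * n * ((-π : ℝ) : ℂ))) = (-1) ^ n := by
    rw [show -(I * n * ((-π : ℝ) : ℂ)) = n * (π * I) by push_cast; ring, exp_int_mul, exp_pi_mul_I]
  rw [hpos, hneg]
  push_cast
  rw [mul_neg, Complex.sinh_neg, Complex.cosh_neg, mul_comm (π : ℂ) y]
  ring

open Complex in
theorem fourierCoeffOn_cosh (y : ℂ) (n : ℤ) (h : y ^ 2 + n ^ 2 ≠ 0) :
    fourierCoeffOn (lt_add_of_pos_right (-π) two_pi_pos) (fun t : ℝ => cosh (y * t)) n =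
      (-1) ^ n * y * sinh (π * y) / (π * (y ^ 2 + n ^ 2)) := by
  rw [fourierCoeffOn_eq_integral, show -π + 2 * π = π by ring]
  simp_rw [fourier_coe_apply, smul_eq_mul]
  rw [intervalIntegral.integral_congr fun t _ => by
      rw [show 2 * π * I * ((-n : ℤ) : ℂ) * t / ((π - -π : ℝ) : ℂ) = -(I * n * t) by
        push_cast; field_simp; ring],
    integral_exp_mul_cosh_neg_pi_pi y n h, real_smul]
  push_cast
  field_simp
  ring

theorem hasSum_fourierCoeffOn_mul_fourier {T : ℝ} [hT : Fact (0 < T)] {a : ℝ} {f : ℝ → ℂ}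
    (hf : ContinuousOn f (Icc a (a + T))) (hfa : f a = f (a + T))
    (hs : Summable (fourierCoeffOn (lt_add_of_pos_right a hT.out) f)) {x : ℝ}
    (hx : x ∈ Ico a (a + T)) :
    HasSum (fun n => fourierCoeffOn (lt_add_of_pos_right a hT.out) f n * fourier n (x : AddCircle T))
      (f x) := by
  let F : C(AddCircle T, ℂ) := ⟨AddCircle.liftIco T a f, AddCircle.liftIco_continuous hfa hf⟩
  have hcoeff : fourierCoeff F = fourierCoeffOn (lt_add_of_pos_right a hT.out) f :=
    funext (fourierCoeff_liftIco_eq f)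
  have hFx : F x = f x := AddCircle.liftIco_coe_apply hx
  have := has_pointwise_sum_fourier_series_of_summable (f := F) (by rwa [hcoeff]) (x : AddCircle T)
  simpa only [hcoeff, hFx, smul_eq_mul] using this

theorem summable_inv_intCast_sq_add_sq (y : ℝ) :
    Summable fun n : ℤ => ((n : ℝ) ^ 2 + y ^ 2)⁻¹ := by
  refine (summable_one_div_int_pow.mpr one_lt_two).of_norm_bounded_eventually ?_
  filter_upwards [(finite_singleton (0 : ℤ)).compl_mem_cofinite] with n (hn : n ≠ 0)
  have hn2 : (0 : ℝ) < (n : ℝ) ^ 2 := by positivity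
  rw [Real.norm_of_nonneg (by positivity), one_div]
  exact inv_anti₀ hn2 (le_add_of_nonneg_right (sq_nonneg y))

theorem summable_neg_one_zpow_div_sq_add_sq (y : ℝ) :
    Summable fun n : ℤ => (-1 : ℝ) ^ n / ((n : ℝ) ^ 2 + y ^ 2) :=
  (summable_inv_intCast_sq_add_sq y).of_norm_bounded fun n => by
    rw [norm_div, norm_zpow, norm_neg, norm_one, one_zpow, one_div,
      Real.norm_of_nonneg (by positivity)]

theorem hasSum_neg_one_zpow_div_sq_add_sq {y : ℝ} (hy : y ≠ 0) :
    HasSum (fun n : ℤ => (-1 : ℝ) ^ n / ((n : ℝ) ^ 2 + y ^ 2)) (π / (y * sinh (π * y))) := by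
  have : Fact (0 < 2 * π) := ⟨two_pi_pos⟩
  have hsinh : sinh (π * y) ≠ 0 := sinh_ne_zero.mpr (mul_ne_zero pi_ne_zero hy)
  set K : ℝ := y * sinh (π * y) / π with hK
  have hK0 : K ≠ 0 := div_ne_zero (mul_ne_zero hy hsinh) pi_ne_zero
  have hcoeff :
      fourierCoeffOn (lt_add_of_pos_right (-π) two_pi_pos) (fun t : ℝ => Complex.cosh (y * t)) =
        fun n : ℤ => ((K * ((-1) ^ n / ((n : ℝ) ^ 2 + y ^ 2)) : ℝ) : ℂ) := by
    ext n
    have hpos : (0 : ℝ) < (n : ℝ) ^ 2 + y ^ 2 := by positivity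
    have hne : (y : ℂ) ^ 2 + (n : ℂ) ^ 2 ≠ 0 := by
      rw [add_comm]; exact_mod_cast hpos.ne'
    rw [fourierCoeffOn_cosh y n hne, hK]
    push_cast
    rw [add_comm ((n : ℂ) ^ 2), mul_comm (π : ℂ) (_ + _), ← div_div]
    ring
  have hcosh := hasSum_fourierCoeffOn_mul_fourier (T := 2 * π) (a := -π) (x := 0)
    (f := fun t : ℝ => Complex.cosh (y * t)) (by fun_prop)
    (by rw [show -π + 2 * π = π by ring]; push_cast; rw [mul_neg, Complex.cosh_neg])
    (by rw [hcoeff]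
        exact Complex.summable_ofReal.mpr ((summable_neg_one_zpow_div_sq_add_sq y).mul_left K))
    ⟨by linarith [pi_pos], by linarith [pi_pos]⟩
  simp only [hcoeff, QuotientAddGroup.mk_zero, fourier_eval_zero, mul_one, Complex.ofReal_zero,
    mul_zero, Complex.cosh_zero] at hcosh
  have hreal : HasSum (fun n : ℤ => K * ((-1) ^ n / ((n : ℝ) ^ 2 + y ^ 2))) 1 := by
    rw [← Complex.hasSum_ofReal, Complex.ofReal_one]; exact hcosh
  have := hreal.div_const K
  simp only [mul_div_cancel_left₀ _ hK0] at this
  rwa [hK, one_div_div] at this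

theorem meixner_levy_density_as_gaussian_mixture (a : ℝ) (ha : 0 < a)
    (x : ℝ) (hx : x ≠ 0) :
    1 / (x * Real.sinh (π * x / a)) =
      (a / (2 * π)) * ∫ u in Ioi (0:ℝ),
        u ^ (-2 : ℝ) * Real.exp (-x^2 / (2*u)) *
          ∑' n : ℤ, (-1 : ℝ) ^ n * Real.exp (-((n:ℝ)^2 * a^2) / (2*u)) := by
  have hden (n : ℤ) : x ^ 2 + (n : ℝ) ^ 2 * a ^ 2 = a ^ 2 * ((n : ℝ) ^ 2 + (x / a) ^ 2) := by
    field_simp; ring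
  have hpos (n : ℤ) : 0 < x ^ 2 + (n : ℝ) ^ 2 * a ^ 2 := by rw [hden]; positivity
  have hintegrand (u : ℝ) : u ^ (-2 : ℝ) * exp (-x ^ 2 / (2 * u)) *
      ∑' n : ℤ, (-1 : ℝ) ^ n * exp (-((n : ℝ) ^ 2 * a ^ 2) / (2 * u)) =
      ∑' n : ℤ, (-1 : ℝ) ^ n * (u ^ (-2 : ℝ) * exp (-(x ^ 2 + (n : ℝ) ^ 2 * a ^ 2) / (2 * u))) := by
    rw [← tsum_mul_left]
    congr 1 with n
    rw [show -(x ^ 2 + (n : ℝ) ^ 2 * a ^ 2) / (2 * u) =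
      -x ^ 2 / (2 * u) + -((n : ℝ) ^ 2 * a ^ 2) / (2 * u) by ring, exp_add]
    ring
  have hsummable : Summable fun n : ℤ => |(-1 : ℝ) ^ n| / (x ^ 2 + (n : ℝ) ^ 2 * a ^ 2) := by
    refine ((summable_inv_intCast_sq_add_sq (x / a)).mul_left (a ^ 2)⁻¹).congr fun n => ?_
    rw [abs_neg_one_zpow, hden, one_div, mul_inv]
  have hseries : ∑' n : ℤ, (-1 : ℝ) ^ n * (2 / (x ^ 2 + (n : ℝ) ^ 2 * a ^ 2)) =
      2 / a ^ 2 * (π / (x / a * sinh (π * (x / a)))) := by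
    rw [← (hasSum_neg_one_zpow_div_sq_add_sq (div_ne_zero hx ha.ne')).tsum_eq, ← tsum_mul_left]
    congr 1 with n
    rw [hden]
    field_simp
  simp_rw [hintegrand]
  rw [integral_tsum_mul_rpow_neg_two_mul_exp_neg_div hpos hsummable, hseries,
    show π * (x / a) = π * x / a by ring]
  have hsinh : sinh (π * x / a) ≠ 0 := sinh_ne_zero.mpr (by positivity)
  field_simp
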